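/- arXiv:1403.2264 — 3 statements merged into one kernel-verified Lean document; each statement's English description precedes it below -/
import Mathlib

section
/- For every positive integer N, the quotient of the unit group (ℤ/Nℤ)^× by its subgroup of squares ((ℤ/Nℤ)^×)² has cardinality exactly 2^{ω(N) − c₁(N)}. (Here ω(N) − c₁(N) is a nonnegative integer.) -/
/-!
For coprime `a, b` the Chinese remainder theorem gives `(ℤ/abℤ)ˣ ≃* (ℤ/aℤ)ˣ × (ℤ/bℤ)ˣ`, so the
index of the squares is multiplicative, as is `2 ^ (ω - c₁)`; it remains to treat prime powers.
In a cyclic group of order `m` the squares have index `gcd(m, 2)`, which settles `pᵏ` with `p`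
odd (`φ(pᵏ)` is even) as well as `2` and `4`. For `k ≥ 3` the squares in `(ℤ/2ᵏℤ)ˣ` are exactly
the units `≡ 1 mod 8`: every unit mod `8` squares to `1`, and the square `25 = 5²` has order
`2ᵏ⁻³`, the order of that kernel. Hence the index is `|(ℤ/8ℤ)ˣ| = 4`.
-/

def c1 (n : ℕ) : ℤ :=
  if n.factorization 2 = 0 ∨ n.factorization 2 = 2 then 0
  else if n.factorization 2 = 1 then 1
  else -1

open scoped Nat

theorem c1_two_pow (k : ℕ) : c1 (2 ^ k) = if k = 0 ∨ k = 2 then 0 else if k = 1 then 1 else -1 := by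
  simp [c1, Nat.prime_two.factorization_self]

theorem c1_prime_pow_of_ne_two {p k : ℕ} (hp : p.Prime) (hp2 : p ≠ 2) : c1 (p ^ k) = 0 := by
  simp [c1, hp.factorization_pow, hp2]

theorem c1_mul {a b : ℕ} (ha : a ≠ 0) (hb : b ≠ 0) (hab : a.Coprime b) :
    c1 (a * b) = c1 a + c1 b := by
  have hf : (a * b).factorization 2 = a.factorization 2 + b.factorization 2 := by
    rw [Nat.factorization_mul ha hb]; rfl
  have h0 : a.factorization 2 = 0 ∨ b.factorization 2 = 0 := by
    by_contra! h
    exact Nat.not_coprime_of_dvd_of_dvd one_lt_two (Nat.dvd_of_factorization_pos h.1)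
      (Nat.dvd_of_factorization_pos h.2) hab
  unfold c1
  rcases h0 with hz | hz <;> rw [hf, hz] <;> split_ifs <;> omega

section

variable {G H : Type*} [CommGroup G] [CommGroup H]

theorem MulEquiv.index_range_powMonoidHom (e : G ≃* H) (n : ℕ) :
    (powMonoidHom n : G →* G).range.index = (powMonoidHom n : H →* H).range.index := by
  have : (powMonoidHom n : G →* G).range.map (e : G →* H) = (powMonoidHom n : H →* H).range := by
    ext y
    simp only [Subgroup.mem_map, MonoidHom.mem_range, powMonoidHom_apply]
    constructor
    · rintro ⟨_, ⟨x, rfl⟩, rfl⟩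
      exact ⟨e x, (map_pow e x n).symm⟩
    · rintro ⟨y, rfl⟩
      exact ⟨_, ⟨e.symm y, rfl⟩, by simp⟩
  rw [← this, Subgroup.index_map_equiv]

theorem index_range_powMonoidHom_prod (n : ℕ) :
    (powMonoidHom n : G × H →* G × H).range.index =
      (powMonoidHom n : G →* G).range.index * (powMonoidHom n : H →* H).range.index := by
  rw [← Subgroup.index_prod, ← MonoidHom.range_prodMap]
  rfl

end

namespace ZMod

theorem index_range_powMonoidHom_units_mul {a b : ℕ} (hab : a.Coprime b) (n : ℕ) :
    (powMonoidHom n : (ZMod (a * b))ˣ →* _).range.index =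
      (powMonoidHom n : (ZMod a)ˣ →* _).range.index *
        (powMonoidHom n : (ZMod b)ˣ →* _).range.index := by
  let e := (Units.mapEquiv (chineseRemainder hab).toMulEquiv).trans .prodUnits
  rw [e.index_range_powMonoidHom, index_range_powMonoidHom_prod]

theorem index_range_powMonoidHom_units_of_isCyclic (N n : ℕ) [NeZero N] [IsCyclic (ZMod N)ˣ] :
    (powMonoidHom n : (ZMod N)ˣ →* _).range.index = (φ N).gcd n := by
  rw [IsCyclic.index_powMonoidHom_range, Nat.card_eq_fintype_card, card_units_eq_totient]

theorem index_range_sq_units_prime_pow {p k : ℕ} (hp : p.Prime) (hp2 : p ≠ 2) (hk : k ≠ 0) :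
    (powMonoidHom 2 : (ZMod (p ^ k))ˣ →* _).range.index = 2 := by
  have := isCyclic_units_of_prime_pow p hp hp2 k
  have : NeZero (p ^ k) := ⟨pow_ne_zero k hp.ne_zero⟩
  have hpk : 2 < p ^ k := (hp.two_le.lt_of_ne' hp2).trans_le (le_self_pow₀ hp.one_le hk)
  rw [index_range_powMonoidHom_units_of_isCyclic]
  exact Nat.gcd_eq_right (even_iff_two_dvd.mp (Nat.totient_even hpk))

theorem index_range_sq_units_two :
    (powMonoidHom 2 : (ZMod 2)ˣ →* _).range.index = 1 := by
  rw [index_range_powMonoidHom_units_of_isCyclic, Nat.totient_two, Nat.gcd_one_left]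

theorem index_range_sq_units_four :
    (powMonoidHom 2 : (ZMod 4)ˣ →* _).range.index = 2 := by
  have := isCyclic_units_four
  rw [index_range_powMonoidHom_units_of_isCyclic, show φ 4 = 2 from rfl, Nat.gcd_self]

theorem index_ker_unitsMap {m n : ℕ} [NeZero m] (h : n ∣ m) : (unitsMap h).ker.index = φ n := by
  have : NeZero n := ⟨fun hn ↦ NeZero.ne m (Nat.eq_zero_of_zero_dvd (hn ▸ h))⟩
  rw [Subgroup.index_ker, (unitsMap h).range_eq_top.mpr (unitsMap_surjective h), Subgroup.card_top,
    Nat.card_eq_fintype_card, card_units_eq_totient]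

theorem range_sq_units_two_pow (n : ℕ) :
    (powMonoidHom 2 : (ZMod (2 ^ (n + 3)))ˣ →* _).range =
      (unitsMap (pow_dvd_pow 2 le_add_self : 2 ^ 3 ∣ 2 ^ (n + 3))).ker := by
  set f := unitsMap (pow_dvd_pow 2 le_add_self : 2 ^ 3 ∣ 2 ^ (n + 3))
  have hsq_le : (powMonoidHom 2 : (ZMod (2 ^ (n + 3)))ˣ →* _).range ≤ f.ker := by
    rintro _ ⟨u, rfl⟩
    rw [MonoidHom.mem_ker, powMonoidHom_apply, map_pow]
    exact (by decide : ∀ v : (ZMod (2 ^ 3))ˣ, v ^ 2 = 1) (f u)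
  have hcard_units : Nat.card (ZMod (2 ^ (n + 3)))ˣ = 2 ^ n * 4 := by
    rw [Nat.card_eq_fintype_card, card_units_eq_totient,
      Nat.totient_prime_pow Nat.prime_two (by omega), show n + 3 - 1 = n + 2 from rfl]
    ring
  have hcard_ker : Nat.card f.ker = 2 ^ n := by
    have h := f.ker.card_mul_index
    rw [index_ker_unitsMap, hcard_units] at h
    exact Nat.eq_of_mul_eq_mul_right (by norm_num) h
  set u : (ZMod (2 ^ (n + 3)))ˣ := unitOfCoprime 5 (Nat.Coprime.pow_right _ (by norm_num))
  have hu : orderOf (u ^ 2) = 2 ^ n := by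
    rw [orderOf_pow' _ two_ne_zero, ← orderOf_units, coe_unitOfCoprime]
    have h5 : orderOf (5 : ZMod (2 ^ (n + 3))) = 2 ^ n * 2 := by
      rw [← pow_succ]
      exact orderOf_five (n + 1)
    rw [Nat.cast_ofNat, h5, Nat.gcd_mul_left_left, Nat.mul_div_cancel _ two_pos]
  refine Subgroup.eq_of_le_of_card_ge hsq_le ?_
  rw [hcard_ker]
  exact Nat.le_of_dvd Nat.card_pos (hu ▸ Subgroup.orderOf_dvd_natCard _ ⟨u, rfl⟩)

theorem index_range_sq_units_two_pow (n : ℕ) :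
    (powMonoidHom 2 : (ZMod (2 ^ (n + 3)))ˣ →* _).range.index = 4 := by
  rw [range_sq_units_two_pow, index_ker_unitsMap]
  rfl

theorem index_range_sq_units_prime_pow_eq {p k : ℕ} (hp : p.Prime) (hk : k ≠ 0) :
    ((powMonoidHom 2 : (ZMod (p ^ k))ˣ →* _).range.index : ℝ) = 2 ^ (1 - c1 (p ^ k)) := by
  rcases eq_or_ne p 2 with rfl | hp2
  · rw [c1_two_pow]
    match k, hk with
    | 1, _ => simp [index_range_sq_units_two]
    | 2, _ => simp [index_range_sq_units_four]
    | n + 3, _ => simp [index_range_sq_units_two_pow]; norm_num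
  · rw [index_range_sq_units_prime_pow hp hp2 hk, c1_prime_pow_of_ne_two hp hp2]
    norm_num

theorem index_range_sq_units (N : ℕ) (hN : N ≠ 0) :
    ((powMonoidHom 2 : (ZMod N)ˣ →* _).range.index : ℝ) =
      2 ^ ((N.primeFactors.card : ℤ) - c1 N) := by
  induction N using Nat.recOnPosPrimePosCoprime with
  | zero => contradiction
  | one => simp [c1, Subgroup.index_eq_one.mpr (Subsingleton.elim _ _)]
  | prime_pow p k hp hk =>
    rw [index_range_sq_units_prime_pow_eq hp hk.ne', Nat.primeFactors_prime_pow hk.ne' hp]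
    simp
  | coprime a b ha hb hab iha ihb =>
    rw [index_range_powMonoidHom_units_mul hab, Nat.cast_mul, iha (by omega), ihb (by omega),
      c1_mul (by omega) (by omega) hab, hab.primeFactors_mul,
      Finset.card_union_of_disjoint hab.disjoint_primeFactors, ← zpow_add₀ two_ne_zero]
    congr 1
    push_cast
    ring

end ZMod

/-- For a positive integer `N`, the quotient of `(ℤ/Nℤ)ˣ` by its subgroup of
squares has cardinality `2 ^ (ω(N) - c₁(N))`. -/
theorem card_units_zmod_quotient_squares (N : ℕ) (hN : 0 < N) :
    (Nat.card ((ZMod N)ˣ ⧸ (powMonoidHom 2 : (ZMod N)ˣ →* (ZMod N)ˣ).range) : ℝ)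
      = 2 ^ ((N.primeFactors.card : ℤ) - c1 N) :=
  ZMod.index_range_sq_units N hN.ne'
end

section
/- Let M ⊆ ℂ be a finite Galois extension of ℚ whose Galois group Gal(M/ℚ) is a generalized dihedral group. Let N be a positive integer and λ ∈ ℂ a primitive N-th root of unity. Then [M ∩ ℚ(λ) : ℚ] ≤ 2^{ω(N) − c₁(N)}. -/
/-!
Let `K = M ∩ ℚ(λ)`, a Galois extension of `ℚ`. Its Galois group is a quotient of
`Gal(M/ℚ) ≅ H ⋊ C₂`, and also of `Gal(ℚ(λ)/ℚ) ≅ (ℤ/N)ˣ`, so it is abelian. In an abelian quotient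
of a generalized dihedral group the relation `r h r⁻¹ = h⁻¹` becomes `h = h⁻¹`, and the
reflections `h r` are involutions, so `Gal(K/ℚ)` has exponent `2`. An exponent-`2` quotient of
the finite abelian group `(ℤ/N)ˣ` has order at most the index of its subgroup of squares, which is
the number of square roots of unity `#{u | u² = 1}`. By the Chinese remainder theorem this number
is multiplicative in `N`; it is at most `2` on odd prime powers (their unit groups are cyclic)
and at most `1, 1, 2, 4` on `2ᵏ` for `k = 0, 1, 2` and `k ≥ 3`, since `x² ≡ 1 mod 2ᵏ⁺¹` forces
`x ≡ ±1 mod 2ᵏ`. The product of these bounds is `2 ^ (ω(N) - c₁(N))`.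
-/

open IntermediateField

namespace SemidirectProduct

variable {H : Type*} [CommGroup H] {φ : Multiplicative (ZMod 2) →* MulAut H}
  {Q : Type*} [Group Q] [IsMulCommutative Q]

theorem map_sq_eq_one_of_inv (hφ : ∀ h : H, φ (Multiplicative.ofAdd (1 : ZMod 2)) h = h⁻¹)
    (f : H ⋊[φ] Multiplicative (ZMod 2) →* Q) (g : H ⋊[φ] Multiplicative (ZMod 2)) :
    f g ^ 2 = 1 := by
  have h_inr (t : Multiplicative (ZMod 2)) : f (inr t) ^ 2 = 1 := by
    rw [← map_pow, ← map_pow, show t ^ 2 = 1 by revert t; decide, map_one, map_one]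
  have h_inl (h : H) : f (inl h) ^ 2 = 1 := by
    set r := Multiplicative.ofAdd (1 : ZMod 2)
    calc f (inl h) ^ 2 = f (inl h) * f (inr r * inl h * inr r⁻¹) := by
          rw [map_mul, map_mul, map_inv, map_inv, mul_comm' (f (inr r)), mul_inv_cancel_right, sq]
      _ = 1 := by rw [← inl_aut, hφ, ← map_mul, ← map_mul, mul_inv_cancel, map_one, map_one]
  rw [← inl_left_mul_inr_right g, map_mul, Commute.mul_pow (mul_comm' _ _), h_inl, h_inr, one_mul]

end SemidirectProduct

theorem card_le_card_ker_powMonoidHom_of_surjective {G Q : Type*} [CommGroup G] [Finite G]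
    [Group Q] {f : G →* Q} (hf : Function.Surjective f) {n : ℕ} (hQ : ∀ q : Q, q ^ n = 1) :
    Nat.card Q ≤ Nat.card (powMonoidHom n : G →* G).ker := by
  have hle : (powMonoidHom n : G →* G).range ≤ f.ker := by
    rintro _ ⟨g, rfl⟩
    exact (f.mem_ker).2 (by rw [powMonoidHom_apply, map_pow, hQ])
  calc Nat.card Q = f.ker.index := by
        rw [Subgroup.index_ker, f.range_eq_top.2 hf, Subgroup.card_top]
    _ ≤ (powMonoidHom n : G →* G).range.index := Subgroup.index_antitone hle
    _ = Nat.card (powMonoidHom n : G →* G).ker := Subgroup.index_range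

theorem card_rootsOfUnity_prod (k : ℕ) (R S : Type*) [CommMonoid R] [CommMonoid S] :
    Nat.card (rootsOfUnity k (R × S)) =
      Nat.card (rootsOfUnity k R) * Nat.card (rootsOfUnity k S) := by
  rw [← Nat.card_prod]
  refine Nat.card_congr ((MulEquiv.prodUnits.toEquiv.subtypeEquiv fun ζ => ?_).trans
    (Equiv.subtypeProdEquivProd (p := (· ∈ rootsOfUnity k R)) (q := (· ∈ rootsOfUnity k S))))
  simp only [mem_rootsOfUnity', Prod.ext_iff]
  exact Iff.rfl

theorem card_rootsOfUnity_le_card_of_forall_mem {k : ℕ} {R : Type*} [CommMonoid R]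
    (s : Finset R) (hs : ∀ x : R, x ^ k = 1 → x ∈ s) :
    Nat.card (rootsOfUnity k R) ≤ s.card := by
  rw [← Nat.card_eq_finsetCard]
  refine Nat.card_le_card_of_injective
    (fun ζ => ⟨(ζ : Rˣ), hs _ ((mem_rootsOfUnity' k _).1 ζ.2)⟩) fun ζ η h => ?_
  exact Subtype.ext (Units.ext (congrArg Subtype.val h))

theorem ZMod.card_rootsOfUnity_mul {m n : ℕ} (h : m.Coprime n) :
    Nat.card (rootsOfUnity 2 (ZMod (m * n))) =
      Nat.card (rootsOfUnity 2 (ZMod m)) * Nat.card (rootsOfUnity 2 (ZMod n)) := by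
  rw [← card_rootsOfUnity_prod, Nat.card_congr
    ((ZMod.chineseRemainder h).toMulEquiv.restrictRootsOfUnity 2).toEquiv]

theorem card_rootsOfUnity_two_le_of_isCyclic (R : Type*) [CommMonoid R] [Finite Rˣ]
    [IsCyclic Rˣ] : Nat.card (rootsOfUnity 2 R) ≤ 2 := by
  rw [rootsOfUnity_eq_ker, IsCyclic.card_powMonoidHom_ker]
  exact Nat.gcd_le_right _ two_pos

theorem Nat.Coprime.card_primeFactors_mul {m n : ℕ} (h : m.Coprime n) :
    (m * n).primeFactors.card = m.primeFactors.card + n.primeFactors.card := by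
  rw [h.primeFactors_mul, Finset.card_union_of_disjoint h.disjoint_primeFactors]

theorem ZMod.card_rootsOfUnity_two_le_of_odd {n : ℕ} (hn : Odd n) :
    Nat.card (rootsOfUnity 2 (ZMod n)) ≤ 2 ^ n.primeFactors.card := by
  induction n using Nat.recOnPosPrimePosCoprime with
  | prime_pow p k hp hk =>
    have hp2 : p ≠ 2 := by
      rintro rfl
      exact Nat.not_even_iff_odd.2 hn ((Nat.even_pow' hk.ne').2 even_two)
    have := ZMod.isCyclic_units_of_prime_pow p hp hp2 k
    simpa [Nat.primeFactors_prime_pow hk.ne' hp] using card_rootsOfUnity_two_le_of_isCyclic _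
  | zero => exact absurd hn (by decide)
  | one => simp [rootsOfUnity_eq_ker]
  | coprime a b _ _ hab iha ihb =>
    rw [ZMod.card_rootsOfUnity_mul hab, hab.card_primeFactors_mul, pow_add]
    exact Nat.mul_le_mul (iha (Nat.Odd.of_mul_left hn)) (ihb (Nat.Odd.of_mul_right hn))

theorem Int.two_pow_dvd_sub_one_or_add_one {k : ℕ} {a : ℤ} (h : 2 ^ (k + 1) ∣ a ^ 2 - 1) :
    2 ^ k ∣ a - 1 ∨ 2 ^ k ∣ a + 1 := by
  have hodd : Odd a := by
    rw [← Int.not_even_iff_odd]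
    rintro ⟨b, rfl⟩
    have := (dvd_pow_self 2 k.succ_ne_zero).trans h
    rw [show (b + b) ^ 2 - 1 = 2 * (2 * b * b) - 1 by ring] at this
    omega
  obtain ⟨u, rfl⟩ := hodd
  have hcop (v : ℤ) (hv : ¬ 2 ∣ v) : IsCoprime ((2 : ℤ) ^ k) v :=
    (Int.prime_two.coprime_iff_not_dvd.2 hv).pow_left
  have h' : 2 ^ k ∣ (2 * u) * (u + 1) := by
    rw [pow_succ] at h
    exact (mul_dvd_mul_iff_right two_ne_zero).1 (h.trans ⟨1, by ring⟩)
  rw [show 2 * u + 1 - 1 = 2 * u by ring, show 2 * u + 1 + 1 = 2 * (u + 1) by ring]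
  rcases Int.even_or_odd u with hu | hu
  · refine .inl ((hcop _ ?_).dvd_of_dvd_mul_right h')
    rwa [← even_iff_two_dvd, Int.even_add_one, not_not]
  · refine .inr ((hcop _ ?_).dvd_of_dvd_mul_right (mul_right_comm (2 : ℤ) u _ ▸ h'))
    rwa [← even_iff_two_dvd, Int.not_even_iff_odd]

theorem ZMod.eq_or_eq_add_of_two_pow_dvd_sub {k : ℕ} {a b : ℤ} (h : 2 ^ k ∣ a - b) :
    (a : ZMod (2 ^ (k + 1))) = b ∨ (a : ZMod (2 ^ (k + 1))) = b + 2 ^ k := by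
  have hzero : ((2 : ℤ) ^ (k + 1) : ZMod (2 ^ (k + 1))) = 0 := by
    exact_mod_cast ZMod.natCast_self (2 ^ (k + 1))
  obtain ⟨t, ht⟩ := h
  obtain ⟨s, rfl | rfl⟩ := Int.even_or_odd' t
  · left
    rw [sub_eq_iff_eq_add'.1 ht]
    push_cast at hzero ⊢
    linear_combination s * hzero
  · right
    rw [sub_eq_iff_eq_add'.1 ht]
    push_cast at hzero ⊢
    linear_combination s * hzero

theorem ZMod.mem_of_sq_eq_one_two_pow {k : ℕ} {x : ZMod (2 ^ (k + 1))} (hx : x ^ 2 = 1) :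
    x ∈ ({1, -1, 1 + 2 ^ k, -1 + 2 ^ k} : Finset (ZMod (2 ^ (k + 1)))) := by
  obtain ⟨a, rfl⟩ := ZMod.intCast_surjective x
  have hdvd : (2 : ℤ) ^ (k + 1) ∣ a ^ 2 - 1 := by
    have := (ZMod.intCast_zmod_eq_zero_iff_dvd (a ^ 2 - 1) (2 ^ (k + 1))).1
      (by push_cast; rw [hx, sub_self])
    exact_mod_cast this
  simp only [Finset.mem_insert, Finset.mem_singleton]
  rcases Int.two_pow_dvd_sub_one_or_add_one hdvd with h | h
  · rcases ZMod.eq_or_eq_add_of_two_pow_dvd_sub (b := 1) h with h' | h' <;> push_cast at h' <;>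
      simp [h']
  · rcases ZMod.eq_or_eq_add_of_two_pow_dvd_sub (b := -1) (by simpa using h) with h' | h' <;>
      push_cast at h' <;> simp [h']

theorem card_primeFactors_two_pow_sub_c1 (k : ℕ) :
    ((2 ^ k).primeFactors.card : ℤ) - c1 (2 ^ k) = (min (k - 1) 2 : ℕ) := by
  rcases k with _ | k
  · simp [c1]
  · have h2 : (2 ^ (k + 1)).factorization 2 = k + 1 := by
      simp [Nat.prime_two.factorization_self]
    rw [Nat.primeFactors_prime_pow k.succ_ne_zero Nat.prime_two, Finset.card_singleton, c1, h2]
    grind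

theorem ZMod.card_rootsOfUnity_two_pow_le (k : ℕ) :
    (Nat.card (rootsOfUnity 2 (ZMod (2 ^ k))) : ℝ) ≤
      2 ^ (((2 ^ k).primeFactors.card : ℤ) - c1 (2 ^ k)) := by
  rw [card_primeFactors_two_pow_sub_c1, zpow_natCast]
  norm_cast
  obtain rfl | rfl | rfl | hk := (by omega : k = 0 ∨ k = 1 ∨ k = 2 ∨ 3 ≤ k)
  · exact card_rootsOfUnity_le_card_of_forall_mem (k := 2) (R := ZMod 1) {1} (by decide)
  · exact card_rootsOfUnity_le_card_of_forall_mem (k := 2) (R := ZMod 2) {1} (by decide)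
  · exact card_rootsOfUnity_le_card_of_forall_mem (k := 2) (R := ZMod 4) {1, 3} (by decide)
  · obtain ⟨j, rfl⟩ : ∃ j, k = j + 1 := ⟨k - 1, by omega⟩
    rw [min_eq_right (by omega)]
    exact (card_rootsOfUnity_le_card_of_forall_mem _
      fun x => ZMod.mem_of_sq_eq_one_two_pow).trans Finset.card_le_four

theorem c1_two_pow_mul_of_odd (k : ℕ) {m : ℕ} (hm : Odd m) : c1 (2 ^ k * m) = c1 (2 ^ k) := by
  have hm2 : m.factorization 2 = 0 := Nat.factorization_eq_zero_of_not_dvd hm.not_two_dvd_nat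
  simp [c1, Nat.factorization_mul (pow_ne_zero k two_ne_zero) hm.pos.ne', hm2]

theorem ZMod.card_rootsOfUnity_two_le {N : ℕ} (hN : N ≠ 0) :
    (Nat.card (rootsOfUnity 2 (ZMod N)) : ℝ) ≤ 2 ^ ((N.primeFactors.card : ℤ) - c1 N) := by
  obtain ⟨k, m, hm, rfl⟩ := Nat.exists_eq_two_pow_mul_odd hN
  have hcop : (2 ^ k).Coprime m := (Nat.coprime_two_left.2 hm).pow_left k
  rw [c1_two_pow_mul_of_odd k hm, hcop.card_primeFactors_mul, ZMod.card_rootsOfUnity_mul hcop,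
    Nat.cast_mul, Nat.cast_add, add_sub_right_comm, zpow_add₀ two_ne_zero, zpow_natCast]
  exact mul_le_mul (ZMod.card_rootsOfUnity_two_pow_le k)
    (by exact_mod_cast ZMod.card_rootsOfUnity_two_le_of_odd hm) (by positivity) (by positivity)

theorem IsPrimitiveRoot.isCyclotomicExtension_adjoin {K L : Type*} [Field K] [Field L]
    [Algebra K L] {n : ℕ} [NeZero n] {ζ : L} (hζ : IsPrimitiveRoot ζ n) :
    IsCyclotomicExtension {n} K K⟮ζ⟯ := by
  change IsCyclotomicExtension {n} K K⟮ζ⟯.toSubalgebra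
  rw [adjoin_simple_toSubalgebra_of_isAlgebraic
    ((hζ.isIntegral (NeZero.pos n)).tower_top (A := K)).isAlgebraic]
  exact hζ.adjoin_isCyclotomicExtension K

theorem IsPrimitiveRoot.isAbelianGalois_adjoin {K L : Type*} [Field K] [Field L]
    [Algebra K L] {n : ℕ} [NeZero n] {ζ : L} (hζ : IsPrimitiveRoot ζ n) :
    IsAbelianGalois K K⟮ζ⟯ :=
  have := hζ.isCyclotomicExtension_adjoin (K := K)
  IsCyclotomicExtension.isAbelianGalois {n} K K⟮ζ⟯

theorem IntermediateField.exists_surjective_algEquiv_of_le {F E : Type*} [Field F] [Field E]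
    [Algebra F E] {K L : IntermediateField F E} (h : K ≤ L) [Normal F K] [hL : Normal F L] :
    ∃ f : Gal(L/F) →* Gal(K/F), Function.Surjective f := by
  let := (inclusion h).toAlgebra
  have : IsScalarTower F K L := IsScalarTower.of_algebraMap_eq' rfl
  exact ⟨AlgEquiv.restrictNormalHom K, AlgEquiv.restrictNormalHom_surjective L⟩

/-- Let `M ⊆ ℂ` be a finite Galois extension of `ℚ` whose Galois group is a
generalized dihedral group `H ⋊ (ℤ/2ℤ)` (with the nontrivial element of
`ℤ/2ℤ` acting on the abelian group `H` by inversion).  If `λ ∈ ℂ` is a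
primitive `N`-th root of unity, then `[M ∩ ℚ(λ) : ℚ] ≤ 2 ^ (ω(N) - c₁(N))`. -/
theorem degree_inf_cyclotomic_le_of_generalized_dihedral
    {H : Type*} [CommGroup H]
    (φ : Multiplicative (ZMod 2) →* MulAut H)
    (hφ : ∀ h : H, φ (Multiplicative.ofAdd (1 : ZMod 2)) h = h⁻¹)
    (M : IntermediateField ℚ ℂ) [FiniteDimensional ℚ M] [IsGalois ℚ M]
    (e : (M ≃ₐ[ℚ] M) ≃* (H ⋊[φ] Multiplicative (ZMod 2)))
    (N : ℕ) (hN : 0 < N) (lam : ℂ) (hlam : IsPrimitiveRoot lam N) :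
    (Module.finrank ℚ (M ⊓ ℚ⟮lam⟯ : IntermediateField ℚ ℂ) : ℝ)
      ≤ 2 ^ ((N.primeFactors.card : ℤ) - c1 N) := by
  have : NeZero N := ⟨hN.ne'⟩
  have : IsCyclotomicExtension {N} ℚ ℚ⟮lam⟯ := hlam.isCyclotomicExtension_adjoin
  have := hlam.isAbelianGalois_adjoin (K := ℚ)
  set K : IntermediateField ℚ ℂ := M ⊓ ℚ⟮lam⟯
  have hKab := IsAbelianGalois.of_algHom (K := ℚ) (inclusion (inf_le_right : K ≤ ℚ⟮lam⟯))
  -- The `ℚ`-algebra structures in the statement are `DivisionRing.toRatAlgebra`, the generic lemmas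
  -- produce `IntermediateField.algebra'`; they agree only after unfolding, so instances coming
  -- from one side are restated or passed explicitly for the other.
  have : IsGalois ℚ K := hKab.toIsGalois
  obtain ⟨ρM, hρM⟩ :=
    exists_surjective_algEquiv_of_le (hL := (inferInstance : Normal ℚ M)) (inf_le_left : K ≤ M)
  obtain ⟨ρL, hρL⟩ := exists_surjective_algEquiv_of_le (inf_le_right : K ≤ ℚ⟮lam⟯)
  let χ := IsCyclotomicExtension.autEquivPow ℚ⟮lam⟯ (Polynomial.cyclotomic.irreducible_rat hN)
  have hsq (σ : Gal(K/ℚ)) : σ ^ 2 = 1 := by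
    obtain ⟨g, rfl⟩ := (hρM.comp e.symm.surjective) σ
    exact SemidirectProduct.map_sq_eq_one_of_inv hφ (ρM.comp e.symm.toMonoidHom) g
  have hcard : Nat.card Gal(K/ℚ) ≤ Nat.card (rootsOfUnity 2 (ZMod N)) := by
    rw [rootsOfUnity_eq_ker]
    exact card_le_card_ker_powMonoidHom_of_surjective
      (f := ρL.comp χ.symm.toMonoidHom) (hρL.comp χ.symm.surjective) hsq
  rw [← IsGalois.card_aut_eq_finrank]
  exact (Nat.cast_le.2 hcard).trans (ZMod.card_rootsOfUnity_two_le hN.ne')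
end

section
/- Let n be a positive integer and let a ≥ 8 be a real number. If φ(n)/2^{ω(n)} ≤ a, then n < a^{1 + 2/log log a}. -/
/-!
Let `Q` be the set of prime factors of `n` and `t = φ(n) / 2 ^ ω(n)`. Euler's product formula
gives `n = t * ∏_{p ∈ Q} 2p/(p-1)` and `∏_{p ∈ Q} (p-1)/2 ≤ t`. So with `S = log a` it suffices
to show `G * log S < 2S` for the gain `G = ∑_{p ∈ Q} log (2p/(p-1))`, given that the cost
`∑_{p ∈ Q} log ((p-1)/2)` is at most `S`. Both only get worse if the `j`-th smallest element of
`Q` is replaced by the `j`-th element of `2, 3, 5, 7, 11, 13, 17, 19, 21, 23, …`, which leaves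
one inequality for each `k = #Q`. For `k ≤ 5` the gain is at most `log 154 < 2e`, and
`e * log S ≤ S`. For `k ≥ 6` it suffices to take `S` equal to the cost, because `log x / x`
decreases beyond `e`; the cases `k = 6, 7` are numerical, and larger `k` follow by induction:
adding `2k + 5` raises the cost by `log (k + 2)`, and this raises `2S / log S` by more than the
gain `log (2 + 1/(k+2))`.
-/

open Real Finset
open scoped Nat

namespace Finset

variable {M : Type*} [AddCommMonoid M] [PartialOrder M] [IsOrderedAddMonoid M]
  {p : ℕ → Prop} [DecidablePred p] {f : ℕ → M}

theorem sum_range_nth_le_sum (hf : MonotoneOn f (Set.ofPred p)) {s : Finset ℕ}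
    (hs : ∀ x ∈ s, p x) : ∑ j ∈ range #s, f (Nat.nth p j) ≤ ∑ x ∈ s, f x := by
  induction s using Finset.induction_on_max with
  | empty => simp
  | insert a s hlt ih =>
    have ha : a ∉ s := fun h => (hlt a h).false
    have hpa : p a := hs a (mem_insert_self a s)
    have hcard : #s ≤ Nat.count p a := by
      rw [Nat.count_eq_card_filter_range]
      exact card_le_card fun x hx =>
        mem_filter.2 ⟨mem_range.2 (hlt x hx), hs x (mem_insert_of_mem hx)⟩
    have hnth : Nat.nth p #s ≤ a := Nat.lt_succ_iff.1 <| Nat.nth_lt_of_lt_count <| by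
      rw [Nat.count_succ, if_pos hpa]; omega
    rw [card_insert_of_notMem ha, sum_range_succ, sum_insert ha, add_comm]
    exact add_le_add
      (hf (Nat.nth_mem_anti (p := p) hcard (by rwa [Nat.nth_count hpa])) hpa hnth)
      (ih fun x hx => hs x (mem_insert_of_mem hx))

theorem sum_le_sum_range_nth (hf : AntitoneOn f (Set.ofPred p)) {s : Finset ℕ}
    (hs : ∀ x ∈ s, p x) : ∑ x ∈ s, f x ≤ ∑ j ∈ range #s, f (Nat.nth p j) :=
  sum_range_nth_le_sum (M := Mᵒᵈ) hf.dual_right hs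

end Finset

theorem log_two_pow_mul_three_pow_mul_five_pow (a b c : ℤ) :
    log ((2 : ℝ) ^ a * 3 ^ b * 5 ^ c) = a * log 2 + b * log 3 + c * log 5 := by
  rw [log_mul (by positivity) (by positivity), log_mul (by positivity) (by positivity),
    log_zpow, log_zpow, log_zpow]

theorem log_le_div_exp_one {x : ℝ} (hx : 0 < x) : log x ≤ x / exp 1 := by
  have := log_le_sub_one_of_pos (div_pos hx (exp_pos 1))
  rw [log_div hx.ne' (exp_pos 1).ne', log_exp] at this
  linarith

theorem mul_log_lt_of_lt_mul_exp_one {X c S : ℝ} (hc : 0 ≤ c) (hS : 1 < S)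
    (hX : X < c * exp 1) : X * log S < c * S := by
  calc X * log S < c * exp 1 * log S := mul_lt_mul_of_pos_right hX (log_pos hS)
    _ ≤ c * exp 1 * (S / exp 1) := by gcongr; exact log_le_div_exp_one (by linarith)
    _ = c * S := by field_simp

theorem mul_log_lt_of_mul_log_lt {X c B S : ℝ} (hX : 0 ≤ X) (hB : exp 1 ≤ B) (hBS : B ≤ S)
    (h : X * log B < c * B) : X * log S < c * S := by
  have hB0 : 0 < B := (exp_pos 1).trans_le hB
  have hS0 : 0 < S := hB0.trans_le hBS
  have hanti : log S / S ≤ log B / B := log_div_self_antitoneOn hB (hB.trans hBS) hBS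
  calc X * log S = X * (log S / S) * S := by field_simp
    _ ≤ X * (log B / B) * S := by gcongr
    _ = X * log B / B * S := by ring
    _ < c * B / B * S := by gcongr
    _ = c * S := by field_simp

noncomputable def logGain (p : ℕ) : ℝ := log (2 * p / (p - 1))

noncomputable def logCost (p : ℕ) : ℝ := log ((p - 1) / 2)

theorem cast_prod_primeFactors_sub_one (n : ℕ) :
    ((∏ p ∈ n.primeFactors, (p - 1) : ℕ) : ℝ) = ∏ p ∈ n.primeFactors, ((p : ℝ) - 1) := by
  push_cast
  refine prod_congr rfl fun p hp => ?_
  rw [Nat.cast_sub (Nat.prime_of_mem_primeFactors hp).one_le, Nat.cast_one]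

theorem natCast_eq_totient_div_mul_prod (n : ℕ) :
    (n : ℝ) = φ n / 2 ^ #n.primeFactors *
      ∏ p ∈ n.primeFactors, (2 * (p : ℝ) / ((p : ℝ) - 1)) := by
  have heuler : (φ n : ℝ) * ∏ p ∈ n.primeFactors, (p : ℝ) =
      n * ∏ p ∈ n.primeFactors, ((p : ℝ) - 1) := by
    rw [← cast_prod_primeFactors_sub_one, ← Nat.cast_prod, ← Nat.cast_mul, ← Nat.cast_mul,
      Nat.totient_mul_prod_primeFactors]
  have hne : ∏ p ∈ n.primeFactors, ((p : ℝ) - 1) ≠ 0 := prod_ne_zero_iff.2 fun p hp => by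
    have : (2 : ℝ) ≤ p := by exact_mod_cast (Nat.prime_of_mem_primeFactors hp).two_le
    linarith
  rw [prod_div_distrib, prod_mul_distrib, prod_const]
  field_simp
  linear_combination -heuler

theorem prod_half_pred_le_totient_div {n : ℕ} (hn : n ≠ 0) :
    ∏ p ∈ n.primeFactors, (((p : ℝ) - 1) / 2) ≤ φ n / 2 ^ #n.primeFactors := by
  rw [prod_div_distrib, prod_const, ← cast_prod_primeFactors_sub_one]
  gcongr
  exact Nat.le_of_dvd (Nat.totient_pos.2 (Nat.pos_of_ne_zero hn))
    (Dvd.intro_left _ (Nat.totient_eq_div_primeFactors_mul n).symm)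

theorem sum_logGain_eq_log_prod {ι : Type*} (s : Finset ι) {g : ι → ℕ}
    (hg : ∀ i ∈ s, 2 ≤ g i) :
    ∑ i ∈ s, logGain (g i) = log (∏ i ∈ s, 2 * (g i : ℝ) / (g i - 1)) := by
  refine (log_prod fun i hi => ?_).symm
  have : (2 : ℝ) ≤ g i := by exact_mod_cast hg i hi
  exact (div_pos (by linarith) (by linarith)).ne'

theorem sum_logCost_eq_log_prod {ι : Type*} (s : Finset ι) {g : ι → ℕ}
    (hg : ∀ i ∈ s, 2 ≤ g i) :
    ∑ i ∈ s, logCost (g i) = log (∏ i ∈ s, ((g i : ℝ) - 1) / 2) := by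
  refine (log_prod fun i hi => ?_).symm
  have : (2 : ℝ) ≤ g i := by exact_mod_cast hg i hi
  exact (div_pos (by linarith) (by linarith)).ne'

theorem log_eq_log_totient_div_add_sum_logGain {n : ℕ} (hn : n ≠ 0) :
    log n = log (φ n / 2 ^ #n.primeFactors) + ∑ p ∈ n.primeFactors, logGain p := by
  have hg : ∀ p ∈ n.primeFactors, 2 ≤ p := fun p hp => (Nat.prime_of_mem_primeFactors hp).two_le
  have ht : (φ n : ℝ) / 2 ^ #n.primeFactors ≠ 0 := by
    have := Nat.totient_pos.2 (Nat.pos_of_ne_zero hn); positivity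
  have hG : ∏ p ∈ n.primeFactors, 2 * (p : ℝ) / (p - 1) ≠ 0 := prod_ne_zero_iff.2 fun p hp => by
    have : (2 : ℝ) ≤ p := by exact_mod_cast hg p hp
    exact (div_pos (by linarith) (by linarith)).ne'
  rw [sum_logGain_eq_log_prod n.primeFactors (g := fun p => p) hg, ← log_mul ht hG,
    ← natCast_eq_totient_div_mul_prod]

theorem sum_logCost_le_log_totient_div {n : ℕ} (hn : n ≠ 0) :
    ∑ p ∈ n.primeFactors, logCost p ≤ log (φ n / 2 ^ #n.primeFactors) := by
  have hg : ∀ p ∈ n.primeFactors, 2 ≤ p := fun p hp => (Nat.prime_of_mem_primeFactors hp).two_le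
  rw [sum_logCost_eq_log_prod n.primeFactors (g := fun p => p) hg]
  refine log_le_log (prod_pos fun p hp => ?_) (prod_half_pred_le_totient_div hn)
  have : (2 : ℝ) ≤ p := by exact_mod_cast hg p hp
  linarith

theorem logGain_nonneg {p : ℕ} (hp : 2 ≤ p) : 0 ≤ logGain p := by
  have : (2 : ℝ) ≤ p := by exact_mod_cast hp
  exact log_nonneg <| (one_le_div (by linarith)).2 (by linarith)

theorem antitoneOn_logGain : AntitoneOn logGain {p | 2 ≤ p} := by
  intro x (hx : 2 ≤ x) y _ hxy
  have hx' : (2 : ℝ) ≤ x := by exact_mod_cast hx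
  have hxy' : (x : ℝ) ≤ y := by exact_mod_cast hxy
  refine log_le_log (div_pos (by linarith) (by linarith)) ?_
  rw [div_le_div_iff₀ (by linarith) (by linarith)]
  nlinarith

theorem monotoneOn_logCost : MonotoneOn logCost {p | 2 ≤ p} := by
  intro x (hx : 2 ≤ x) y _ hxy
  have hx' : (2 : ℝ) ≤ x := by exact_mod_cast hx
  have hxy' : (x : ℝ) ≤ y := by exact_mod_cast hxy
  exact log_le_log (by linarith) (by linarith)

/-- A set of numbers containing every prime, whose `nth` element is explicit. It agrees with the
primes up to `17`, which the numerical cases `k = 6, 7` need exactly. -/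
def PaddedPrime (m : ℕ) : Prop := m.Prime ∨ Odd m ∧ 17 ≤ m

instance : DecidablePred PaddedPrime := fun m => inferInstanceAs (Decidable (m.Prime ∨ _))

theorem PaddedPrime.two_le {m : ℕ} (hm : PaddedPrime m) : 2 ≤ m :=
  hm.elim Nat.Prime.two_le fun h => by omega

theorem two_le_nth_paddedPrime (j : ℕ) : 2 ≤ Nat.nth PaddedPrime j :=
  PaddedPrime.two_le <| Nat.nth_mem_of_infinite
    (Nat.infinite_setOfPred_prime.mono fun _ => Or.inl : (Set.ofPred PaddedPrime).Infinite) j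

theorem nth_paddedPrime_of_count {m j : ℕ} (hm : PaddedPrime m)
    (h : Nat.count PaddedPrime m = j) : Nat.nth PaddedPrime j = m :=
  h ▸ Nat.nth_count hm

theorem nth_paddedPrime_table :
    Nat.nth PaddedPrime 0 = 2 ∧ Nat.nth PaddedPrime 1 = 3 ∧ Nat.nth PaddedPrime 2 = 5 ∧
    Nat.nth PaddedPrime 3 = 7 ∧ Nat.nth PaddedPrime 4 = 11 ∧ Nat.nth PaddedPrime 5 = 13 ∧
    Nat.nth PaddedPrime 6 = 17 := by
  refine ⟨?_, ?_, ?_, ?_, ?_, ?_, ?_⟩ <;> exact nth_paddedPrime_of_count (by decide) (by decide)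

theorem count_paddedPrime {k : ℕ} (hk : 6 ≤ k) : Nat.count PaddedPrime (2 * k + 5) = k := by
  induction k, hk using Nat.le_induction with
  | base => decide
  | succ k hk ih =>
    have hodd : PaddedPrime (2 * k + 5) := Or.inr ⟨⟨k + 2, by ring⟩, by omega⟩
    have heven : ¬ PaddedPrime (2 * k + 6) := by
      have he : Even (2 * k + 6) := ⟨k + 3, by ring⟩
      rintro (hp | ⟨hodd, -⟩)
      · have := hp.even_iff.1 he; omega
      · exact Nat.not_odd_iff_even.2 he hodd
    rw [show 2 * (k + 1) + 5 = 2 * k + 5 + 1 + 1 by ring, Nat.count_succ, Nat.count_succ, ih,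
      if_pos hodd, if_neg heven]

theorem nth_paddedPrime {k : ℕ} (hk : 6 ≤ k) : Nat.nth PaddedPrime k = 2 * k + 5 :=
  nth_paddedPrime_of_count (Or.inr ⟨⟨k + 2, by ring⟩, by omega⟩) (count_paddedPrime hk)

noncomputable def gainBound (k : ℕ) : ℝ := ∑ j ∈ range k, logGain (Nat.nth PaddedPrime j)

noncomputable def costBound (k : ℕ) : ℝ := ∑ j ∈ range k, logCost (Nat.nth PaddedPrime j)

theorem sum_logGain_le_gainBound {s : Finset ℕ} (hs : ∀ p ∈ s, p.Prime) :
    ∑ p ∈ s, logGain p ≤ gainBound #s :=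
  sum_le_sum_range_nth (antitoneOn_logGain.mono fun _ h => PaddedPrime.two_le h)
    fun p hp => Or.inl (hs p hp)

theorem costBound_le_sum_logCost {s : Finset ℕ} (hs : ∀ p ∈ s, p.Prime) :
    costBound #s ≤ ∑ p ∈ s, logCost p :=
  sum_range_nth_le_sum (monotoneOn_logCost.mono fun _ h => PaddedPrime.two_le h)
    fun p hp => Or.inl (hs p hp)

theorem gainBound_nonneg (k : ℕ) : 0 ≤ gainBound k :=
  sum_nonneg fun j _ => logGain_nonneg (two_le_nth_paddedPrime j)

theorem gainBound_mono : Monotone gainBound := fun _ _ h =>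
  sum_le_sum_of_subset_of_nonneg (range_subset_range.2 h)
    fun j _ _ => logGain_nonneg (two_le_nth_paddedPrime j)

theorem gainBound_succ {k : ℕ} (hk : 6 ≤ k) :
    gainBound (k + 1) = gainBound k + log ((2 * k + 5) / (k + 2)) := by
  rw [gainBound, sum_range_succ, nth_paddedPrime hk, logGain]
  congr 2
  push_cast
  rw [show 2 * (k : ℝ) + 5 - 1 = 2 * (k + 2) by ring, mul_div_mul_left _ _ two_ne_zero]

theorem costBound_succ {k : ℕ} (hk : 6 ≤ k) :
    costBound (k + 1) = costBound k + log (k + 2) := by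
  rw [costBound, sum_range_succ, nth_paddedPrime hk, logCost]
  congr 2
  push_cast
  ring

theorem gainBound_five : gainBound 5 = log 154 := by
  obtain ⟨h0, h1, h2, h3, h4, -⟩ := nth_paddedPrime_table
  rw [gainBound, sum_logGain_eq_log_prod _ fun j _ => two_le_nth_paddedPrime j]
  simp only [prod_range_succ, prod_range_zero, h0, h1, h2, h3, h4]
  norm_num

theorem gainBound_six : gainBound 6 = log (1001 / 3) := by
  obtain ⟨h0, h1, h2, h3, h4, h5, -⟩ := nth_paddedPrime_table
  rw [gainBound, sum_logGain_eq_log_prod _ fun j _ => two_le_nth_paddedPrime j]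
  simp only [prod_range_succ, prod_range_zero, h0, h1, h2, h3, h4, h5]
  norm_num

theorem costBound_six : costBound 6 = log 90 := by
  obtain ⟨h0, h1, h2, h3, h4, h5, -⟩ := nth_paddedPrime_table
  rw [costBound, sum_logCost_eq_log_prod _ fun j _ => two_le_nth_paddedPrime j]
  simp only [prod_range_succ, prod_range_zero, h0, h1, h2, h3, h4, h5]
  norm_num

theorem gainBound_seven : gainBound 7 = log (17017 / 24) := by
  obtain ⟨h0, h1, h2, h3, h4, h5, h6⟩ := nth_paddedPrime_table
  rw [gainBound, sum_logGain_eq_log_prod _ fun j _ => two_le_nth_paddedPrime j]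
  simp only [prod_range_succ, prod_range_zero, h0, h1, h2, h3, h4, h5, h6]
  norm_num

theorem costBound_seven : costBound 7 = log 720 := by
  obtain ⟨h0, h1, h2, h3, h4, h5, h6⟩ := nth_paddedPrime_table
  rw [costBound, sum_logCost_eq_log_prod _ fun j _ => two_le_nth_paddedPrime j]
  simp only [prod_range_succ, prod_range_zero, h0, h1, h2, h3, h4, h5, h6]
  norm_num

theorem log_ninety : log 90 = log 2 + 2 * log 3 + log 5 := by
  rw [show (90 : ℝ) = 2 ^ (1 : ℤ) * 3 ^ (2 : ℤ) * 5 ^ (1 : ℤ) by norm_num,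
    log_two_pow_mul_three_pow_mul_five_pow]
  push_cast; ring

theorem log_seven_hundred_twenty : log 720 = 4 * log 2 + 2 * log 3 + log 5 := by
  rw [show (720 : ℝ) = 2 ^ (4 : ℤ) * 3 ^ (2 : ℤ) * 5 ^ (1 : ℤ) by norm_num,
    log_two_pow_mul_three_pow_mul_five_pow]
  push_cast; ring

theorem gainBound_five_lt : gainBound 5 < 2 * exp 1 := by
  have h : log 154 ≤ log (2 ^ (5 : ℤ) * 3 ^ (0 : ℤ) * 5 ^ (1 : ℤ)) :=
    log_le_log (by norm_num) (by norm_num)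
  rw [log_two_pow_mul_three_pow_mul_five_pow] at h
  push_cast at h
  rw [gainBound_five]
  linarith [log_two_lt_d9, log_five_lt_d9, exp_one_gt_d9]

theorem gainBound_six_mul_log_lt :
    gainBound 6 * log (costBound 6) < 2 * costBound 6 := by
  rw [gainBound_six, costBound_six]
  have := log_two_lt_d9; have := log_three_lt_d9; have := log_five_lt_d9
  have := log_two_gt_d9; have := log_three_gt_d9; have := log_five_gt_d9
  have hB := log_ninety
  have hX : log (1001 / 3) ≤ log (2 ^ (-1 : ℤ) * 3 ^ (3 : ℤ) * 5 ^ (2 : ℤ)) :=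
    log_le_log (by norm_num) (by norm_num)
  have hL : log (log 90) ≤ log (2 ^ (-1 : ℤ) * 3 ^ (2 : ℤ) * 5 ^ (0 : ℤ)) :=
    log_le_log (by linarith) (by norm_num; linarith)
  rw [log_two_pow_mul_three_pow_mul_five_pow] at hX hL
  push_cast at hX hL
  have hL0 : 0 ≤ log (log 90) := log_nonneg (by linarith)
  have hX0 : 0 ≤ log (1001 / 3 : ℝ) := log_nonneg (by norm_num)
  nlinarith [mul_le_mul hX hL hL0 (by linarith)]

theorem gainBound_seven_mul_log_lt :
    gainBound 7 * log (costBound 7) < 2 * costBound 7 := by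
  rw [gainBound_seven, costBound_seven]
  have := log_two_lt_d9; have := log_three_lt_d9; have := log_five_lt_d9
  have := log_two_gt_d9; have := log_three_gt_d9; have := log_five_gt_d9
  have hB := log_seven_hundred_twenty
  have hX : log (17017 / 24) ≤ log 720 := log_le_log (by norm_num) (by norm_num)
  have hL : log (log 720) ≤ log (2 ^ (-2 : ℤ) * 3 ^ (3 : ℤ) * 5 ^ (0 : ℤ)) :=
    log_le_log (by linarith) (by norm_num; linarith)
  rw [log_two_pow_mul_three_pow_mul_five_pow] at hL
  push_cast at hL
  have hL0 : 0 ≤ log (log 720) := log_nonneg (by linarith)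
  have hX0 : 0 ≤ log (17017 / 24 : ℝ) := log_nonneg (by norm_num)
  nlinarith [mul_le_mul hX hL hL0 (by linarith)]

theorem two_le_log_add_two {k : ℕ} (hk : 7 ≤ k) : 2 ≤ log ((k : ℝ) + 2) := by
  have hk' : (7 : ℝ) ≤ k := by exact_mod_cast hk
  have h9 : log 9 ≤ log ((k : ℝ) + 2) := log_le_log (by norm_num) (by linarith)
  rw [show (9 : ℝ) = 3 ^ 2 by norm_num, log_pow] at h9
  push_cast at h9
  linarith [log_three_gt_d9]

theorem six_le_costBound {k : ℕ} (hk : 7 ≤ k) : 6 ≤ costBound k := by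
  induction k, hk using Nat.le_induction with
  | base =>
    rw [costBound_seven, log_seven_hundred_twenty]
    linarith [log_two_gt_d9, log_three_gt_d9, log_five_gt_d9]
  | succ k hk ih =>
    rw [costBound_succ (by omega)]
    linarith [two_le_log_add_two hk]

theorem three_mul_log_le_costBound {k : ℕ} (hk : 7 ≤ k) :
    3 * log ((k : ℝ) + 2) ≤ costBound k + log 2 := by
  induction k, hk using Nat.le_induction with
  | base =>
    rw [costBound_seven, log_seven_hundred_twenty,
      show ((7 : ℕ) : ℝ) + 2 = 3 ^ 2 by norm_num, log_pow]
    push_cast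
    linarith [log_two_gt_d9, log_three_lt_d9, log_five_gt_d9]
  | succ k hk ih =>
    have hk' : (7 : ℝ) ≤ k := by exact_mod_cast hk
    have hstep : log ((k : ℝ) + 3) ≤ log ((k : ℝ) + 2) + 1 / 9 := by
      have := log_le_sub_one_of_pos (show 0 < ((k : ℝ) + 3) / (k + 2) by positivity)
      rw [log_div (by positivity) (by positivity)] at this
      have : ((k : ℝ) + 3) / (k + 2) - 1 ≤ 1 / 9 := by
        rw [div_sub_one (by positivity), div_le_div_iff₀ (by positivity) (by norm_num)]
        linarith
      linarith
    rw [costBound_succ (by omega)]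
    push_cast
    rw [show (k : ℝ) + 1 + 2 = k + 3 by ring]
    linarith [two_le_log_add_two hk]

theorem costBound_le_mul_log {k : ℕ} (hk : 7 ≤ k) :
    costBound k ≤ ((k : ℝ) + 2) * log ((k : ℝ) + 2) := by
  induction k, hk using Nat.le_induction with
  | base =>
    rw [costBound_seven, log_seven_hundred_twenty,
      show ((7 : ℕ) : ℝ) + 2 = 3 ^ 2 by norm_num, log_pow]
    push_cast
    linarith [log_two_lt_d9, log_three_gt_d9, log_five_lt_d9]
  | succ k hk ih =>
    have hlog : log ((k : ℝ) + 2) ≤ log ((k : ℝ) + 1 + 2) :=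
      log_le_log (by positivity) (by linarith)
    rw [costBound_succ (by omega)]
    push_cast
    nlinarith [two_le_log_add_two hk]

theorem log_costBound_le {k : ℕ} (hk : 7 ≤ k) :
    log (costBound k) ≤ 3 / 2 * log ((k : ℝ) + 2) := by
  have hΔ := two_le_log_add_two hk
  have h := log_le_log (by linarith [six_le_costBound hk]) (costBound_le_mul_log hk)
  rw [log_mul (by positivity) (by linarith)] at h
  have := log_le_div_exp_one (show 0 < log ((k : ℝ) + 2) by linarith)
  have : log ((k : ℝ) + 2) / exp 1 ≤ log ((k : ℝ) + 2) / 2 :=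
    div_le_div_of_nonneg_left (by linarith) (by norm_num) (by linarith [exp_one_gt_d9])
  linarith

theorem log_two_mul_add_five_div_le {k : ℕ} (hk : 7 ≤ k) :
    log ((2 * k + 5) / (k + 2)) ≤ 0.76 := by
  have hk' : (7 : ℝ) ≤ k := by exact_mod_cast hk
  have h := log_le_sub_one_of_pos (show 0 < ((2 * k + 5) / (k + 2) : ℝ) / 2 by positivity)
  rw [log_div (by positivity) (by norm_num)] at h
  have : ((2 * k + 5) / (k + 2) : ℝ) / 2 - 1 ≤ 1 / 18 := by
    rw [div_div, div_sub_one (by positivity), div_le_div_iff₀ (by positivity) (by norm_num)]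
    linarith
  linarith [log_two_lt_d9]

/-- The induction step for `k ≥ 7`, with `X = gainBound k`, `B = costBound k`,
`Δ = log (k + 2)` and `γ = log (2 + 1 / (k + 2))`. -/
theorem add_mul_log_add_lt {X γ B Δ : ℝ} (hX : 0 ≤ X) (hγ : γ ≤ 0.76) (hΔ : 2 ≤ Δ)
    (hB : 6 ≤ B) (hBΔ : 3 * Δ ≤ B + log 2) (hLB : log B ≤ 3 / 2 * Δ)
    (h : X * log B < 2 * B) : (X + γ) * log (B + Δ) < 2 * (B + Δ) := by
  have hB0 : 0 < B := by linarith
  set L := log B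
  set L' := log (B + Δ)
  have hL : 1.79 ≤ L := by
    have h6 : log 6 ≤ L := log_le_log (by norm_num) hB
    rw [show (6 : ℝ) = 2 * 3 by norm_num, log_mul (by norm_num) (by norm_num)] at h6
    linarith [log_two_gt_d9, log_three_gt_d9]
  have hδ : Δ / B ≤ 0.38 := by
    rw [div_le_iff₀ hB0]; linarith [log_two_lt_d9]
  have hL' : L' ≤ L + Δ / B := by
    have := log_le_sub_one_of_pos (show 0 < (B + Δ) / B by positivity)
    rw [log_div (by positivity) hB0.ne', add_div, div_self hB0.ne'] at this
    linarith
  have hL'0 : 0 ≤ L' := log_nonneg (by linarith)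
  -- `γ` is at most the increment `2(B + Δ) / L' - 2B / L ≥ 2Δ(L - 1) / (L L')`
  have hγLL' : γ * L' * L ≤ 2 * Δ * (L - 1) := by
    have h1 : γ * L' * L ≤ 0.76 * (L + 0.38) * L :=
      mul_le_mul_of_nonneg_right (mul_le_mul hγ (by linarith) hL'0 (by norm_num)) (by linarith)
    nlinarith [mul_nonneg (sub_nonneg.2 hL) (sub_nonneg.2 hLB)]
  have hXL : X * L * L' ≤ X * L * L + X * L * (Δ / B) := by
    have := mul_le_mul_of_nonneg_left hL' (mul_nonneg hX (by linarith : 0 ≤ L))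
    linarith
  have hXLδ : X * L * (Δ / B) ≤ 2 * B * (Δ / B) :=
    mul_le_mul_of_nonneg_right h.le (by positivity)
  have hBδ : 2 * B * (Δ / B) = 2 * Δ := by field_simp
  have hmain : (X + γ) * L' * L < 2 * (B + Δ) * L := by
    nlinarith [mul_lt_mul_of_pos_right h (by linarith : (0 : ℝ) < L)]
  exact lt_of_mul_lt_mul_right hmain (by linarith)

theorem gainBound_mul_log_costBound_lt {k : ℕ} (hk : 6 ≤ k) :
    gainBound k * log (costBound k) < 2 * costBound k := by
  obtain rfl | hk7 : 6 = k ∨ 7 ≤ k := hk.eq_or_lt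
  · exact gainBound_six_mul_log_lt
  clear hk
  induction k, hk7 using Nat.le_induction with
  | base => exact gainBound_seven_mul_log_lt
  | succ k hk ih =>
    rw [gainBound_succ (by omega), costBound_succ (by omega)]
    exact add_mul_log_add_lt (gainBound_nonneg k) (log_two_mul_add_five_div_le hk)
      (two_le_log_add_two hk) (six_le_costBound hk) (three_mul_log_le_costBound hk)
      (log_costBound_le hk) ih

theorem exp_one_le_costBound {k : ℕ} (hk : 6 ≤ k) : exp 1 ≤ costBound k := by
  rcases hk.eq_or_lt with rfl | hk
  · rw [costBound_six, log_ninety]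
    linarith [exp_one_lt_d9, log_two_gt_d9, log_three_gt_d9, log_five_gt_d9]
  · linarith [six_le_costBound hk, exp_one_lt_d9]

theorem sum_logGain_mul_log_lt {s : Finset ℕ} (hs : ∀ p ∈ s, p.Prime) {S : ℝ} (hS : 1 < S)
    (hcost : ∑ p ∈ s, logCost p ≤ S) : (∑ p ∈ s, logGain p) * log S < 2 * S := by
  refine (mul_le_mul_of_nonneg_right (sum_logGain_le_gainBound hs) (log_pos hS).le).trans_lt ?_
  rcases le_or_gt #s 5 with hk | hk
  · exact mul_log_lt_of_lt_mul_exp_one zero_le_two hS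
      ((gainBound_mono hk).trans_lt gainBound_five_lt)
  · exact mul_log_lt_of_mul_log_lt (gainBound_nonneg _) (exp_one_le_costBound hk)
      ((costBound_le_sum_logCost hs).trans hcost) (gainBound_mul_log_costBound_lt hk)

/-- If `n` is a positive integer, `a ≥ 8` is real, and
`φ(n) / 2^(ω(n)) ≤ a`, then `n < a ^ (1 + 2 / log log a)`. -/
theorem lt_of_totient_div_two_pow_omega_le (n : ℕ) (hn : 0 < n) (a : ℝ)
    (ha : 8 ≤ a) (h : (n.totient : ℝ) / 2 ^ n.primeFactors.card ≤ a) :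
    (n : ℝ) < a ^ (1 + 2 / Real.log (Real.log a)) := by
  have ht : 0 < (n.totient : ℝ) / 2 ^ n.primeFactors.card := by
    have := Nat.totient_pos.2 hn; positivity
  have hS : 1 < log a := by
    rw [← log_exp 1]
    exact log_lt_log (exp_pos 1) (by linarith [exp_one_lt_d9])
  have hgain : ∑ p ∈ n.primeFactors, logGain p < 2 * log a / log (log a) := by
    rw [lt_div_iff₀ (log_pos hS)]
    exact sum_logGain_mul_log_lt (fun p => Nat.prime_of_mem_primeFactors) hS
      ((sum_logCost_le_log_totient_div hn.ne').trans (log_le_log ht h))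
  calc (n : ℝ) = exp (log n) := (exp_log (by exact_mod_cast hn)).symm
    _ < exp (log a * (1 + 2 / log (log a))) := by
        rw [exp_lt_exp, log_eq_log_totient_div_add_sum_logGain hn.ne',
          show log a * (1 + 2 / log (log a)) = log a + 2 * log a / log (log a) by ring]
        exact add_lt_add_of_le_of_lt (log_le_log ht h) hgain
    _ = a ^ (1 + 2 / log (log a)) := (rpow_def_of_pos (by linarith) _).symm
end
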